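/- arXiv:1802.09084 — 4 statements merged into one kernel-verified Lean document; each statement's English description precedes it below -/
import Mathlib

section
/- Let m : S_∞ → ℝ₊ be a map with m(∅) = 0, where S_∞ = {∅} ∪ {{w} : w ∈ A^*} ∪ {wA^∞ : w ∈ A^*}. Then there exists a unique measure 𝑚̃ on Σ_{A^∞} extending m if and only if for all w ∈ A^*, m(wA^∞) = m({w}) + Σ_{a∈A} m(waA^∞). -/
open MeasureTheory

/-- Finite and infinite words over `A`. -/
def Words (A : Type*) : Type _ := List A ⊕ (ℕ → A)

/-- Concatenation of a finite word with a finite or infinite word. -/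
def wcat {A : Type*} (w : List A) : Words A → Words A
  | Sum.inl u => Sum.inl (w ++ u)
  | Sum.inr f => Sum.inr fun n => if h : n < w.length then w.get ⟨n, h⟩ else f (n - w.length)

/-- The cone `wA^∞` of words with prefix `w`. -/
def cone {A : Type*} (w : List A) : Set (Words A) := Set.range (wcat w)

/-- The generating family `S_∞`. -/
def Sinf (A : Type*) : Set (Set (Words A)) :=
  {∅} ∪ (Set.range fun w : List A => ({Sum.inl w} : Set (Words A))) ∪
    Set.range (cone (A := A))

instance {A : Type*} : MeasurableSpace (Words A) := MeasurableSpace.generateFrom (Sinf A)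

/-!
Necessity: `cone w` is the disjoint union of `{w}` and the cones `cone (w ++ [a])`.

Sufficiency: code the cone of `w` by a half-open interval of length `m (cone w)`, the intervals
of the children `w ++ [a]` laid side by side inside it (they fit, as their masses add up to at
most `m (cone w)`). For a point `x`, the words whose intervals contain `x` are closed under
prefixes and there is at most one of each length, so they are the prefixes of a single finite or
infinite word. Pushing Lebesgue measure forward along this coding gives the prescribed mass to
every cone, and additivity then forces the masses of the singletons. Uniqueness holds because
`S_∞` is a π-system generating the σ-algebra and the measure is finite.
-/

open scoped NNReal

section LetterSums

variable {A M : Type*} [Fintype A] [LinearOrder A] [AddCommMonoid M]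

lemma sum_filter_lt_add_eq_sum_filter_le (f : A → M) (a : A) :
    ∑ x ∈ Finset.univ.filter (· < a), f x + f a =
      ∑ x ∈ Finset.univ.filter (· ≤ a), f x := by
  have hins : Finset.univ.filter (· ≤ a) = insert a (Finset.univ.filter (· < a)) := by
    ext x
    simp [le_iff_lt_or_eq, or_comm]
  rw [hins, Finset.sum_insert (by simp), add_comm]

variable [PartialOrder M] [CanonicallyOrderedAdd M]

lemma sum_filter_lt_add_le_sum (f : A → M) (a : A) :
    ∑ x ∈ Finset.univ.filter (· < a), f x + f a ≤ ∑ x, f x := by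
  rw [sum_filter_lt_add_eq_sum_filter_le]
  exact Finset.sum_le_sum_of_subset (Finset.subset_univ _)

lemma sum_filter_lt_add_le_sum_filter_lt (f : A → M) {a b : A} (hab : a < b) :
    ∑ x ∈ Finset.univ.filter (· < a), f x + f a ≤
      ∑ x ∈ Finset.univ.filter (· < b), f x := by
  rw [sum_filter_lt_add_eq_sum_filter_le]
  exact Finset.sum_le_sum_of_subset fun x hx => by
    simp only [Finset.mem_filter, Finset.mem_univ, true_and] at hx ⊢
    exact hx.trans_lt hab

end LetterSums

namespace Words

variable {A : Type*}

lemma wcat_wcat (w t : List A) (z : Words A) : wcat w (wcat t z) = wcat (w ++ t) z := by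
  cases z with
  | inl u => exact congrArg Sum.inl (List.append_assoc w t u).symm
  | inr f =>
    refine congrArg Sum.inr (funext fun n => ?_)
    simp only [List.get_eq_getElem, List.length_append]
    by_cases hw : n < w.length
    · simp [hw, List.getElem_append_left hw, show n < w.length + t.length by omega]
    · by_cases ht : n - w.length < t.length
      · simp [hw, ht, List.getElem_append_right (not_lt.1 hw),
          show n < w.length + t.length by omega]
      · simp [hw, ht, show ¬ n < w.length + t.length by omega, Nat.sub_sub]

lemma mem_cone_inl {w u : List A} : Sum.inl u ∈ cone w ↔ w <+: u := by
  constructor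
  · rintro ⟨_ | _, h⟩
    · exact ⟨_, Sum.inl_injective h⟩
    · cases h
  · rintro ⟨t, rfl⟩
    exact ⟨Sum.inl t, rfl⟩

lemma mem_cone_inr {w : List A} {f : ℕ → A} :
    Sum.inr f ∈ cone w ↔ ∀ i (h : i < w.length), f i = w[i] := by
  constructor
  · rintro ⟨_ | g, h⟩
    · cases h
    · intro i hi
      simp [← Sum.inr_injective h, hi]
  · intro h
    refine ⟨Sum.inr fun n => f (n + w.length), congrArg Sum.inr (funext fun n => ?_)⟩
    by_cases hn : n < w.length
    · simp [hn, h n hn]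
    · simp [hn, Nat.sub_add_cancel (not_lt.1 hn)]

lemma cone_nil : cone ([] : List A) = Set.univ :=
  Set.eq_univ_of_forall fun z => ⟨z, by cases z <;> rfl⟩

lemma cone_subset_cone {w v : List A} (h : w <+: v) : cone v ⊆ cone w := by
  obtain ⟨t, rfl⟩ := h
  rintro _ ⟨z, rfl⟩
  exact ⟨wcat t z, wcat_wcat w t z⟩

lemma cone_eq_union (w : List A) :
    cone w = {Sum.inl w} ∪ ⋃ a : A, cone (w ++ [a]) := by
  refine Set.Subset.antisymm ?_ ?_
  · rintro _ ⟨(_ | ⟨a, u⟩) | f, rfl⟩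
    · exact Or.inl (congrArg Sum.inl (List.append_nil w))
    · refine Or.inr (Set.mem_iUnion.2 ⟨a, mem_cone_inl.2 ?_⟩)
      exact (List.prefix_append_right_inj w).2 ⟨u, rfl⟩
    · have hf : wcat [f 0] (Sum.inr fun n => f (n + 1)) = Sum.inr f :=
        congrArg Sum.inr (funext fun n => by cases n <;> simp)
      refine Or.inr (Set.mem_iUnion.2 ⟨f 0, Sum.inr fun n => f (n + 1), ?_⟩)
      exact (wcat_wcat w [f 0] _).symm.trans (congrArg (wcat w) hf)
  · refine Set.union_subset ?_ (Set.iUnion_subset fun a => cone_subset_cone ⟨[a], rfl⟩)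
    exact Set.singleton_subset_iff.2 (mem_cone_inl.2 (List.prefix_refl w))

lemma inl_notMem_cone_append (w : List A) (a : A) : Sum.inl w ∉ cone (w ++ [a]) := fun h => by
  simpa using (mem_cone_inl.1 h).length_le

lemma disjoint_singleton_iUnion_cone_append (w : List A) :
    Disjoint {Sum.inl w} (⋃ a : A, cone (w ++ [a])) :=
  Set.disjoint_singleton_left.2 fun h =>
    let ⟨a, ha⟩ := Set.mem_iUnion.1 h
    inl_notMem_cone_append w a ha

lemma singleton_inl_eq_diff (w : List A) :
    {Sum.inl w} = cone w \ ⋃ a : A, cone (w ++ [a]) := by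
  rw [cone_eq_union w, Set.union_sdiff_right,
    (disjoint_singleton_iUnion_cone_append w).sdiff_eq_left]

lemma prefix_of_inr_mem_cone {w v : List A} {f : ℕ → A} (hw : Sum.inr f ∈ cone w)
    (hv : Sum.inr f ∈ cone v) (hle : w.length ≤ v.length) : w <+: v := by
  rw [List.prefix_iff_eq_take]
  refine List.ext_getElem (by simp [hle]) fun i hi _ => ?_
  rw [List.getElem_take, ← mem_cone_inr.1 hw i hi, mem_cone_inr.1 hv i (by omega)]

lemma prefix_or_prefix_of_mem_cone {w v : List A} {z : Words A} (hw : z ∈ cone w)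
    (hv : z ∈ cone v) : w <+: v ∨ v <+: w := by
  cases z with
  | inl u => exact List.prefix_or_prefix_of_prefix (mem_cone_inl.1 hw) (mem_cone_inl.1 hv)
  | inr f =>
    rcases le_total w.length v.length with hle | hle
    · exact Or.inl (prefix_of_inr_mem_cone hw hv hle)
    · exact Or.inr (prefix_of_inr_mem_cone hv hw hle)

lemma disjoint_cone_append (w : List A) {a b : A} (hab : a ≠ b) :
    Disjoint (cone (w ++ [a])) (cone (w ++ [b])) := by
  refine Set.disjoint_left.2 fun z ha hb => hab ?_
  have hlen : (w ++ [a]).length = (w ++ [b]).length := by simp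
  rcases prefix_or_prefix_of_mem_cone ha hb with h | h
  · simpa using h.eq_of_length hlen
  · simpa using (h.eq_of_length hlen.symm).symm

lemma subset_or_subset_of_mem_Sinf {S T : Set (Words A)} (hS : S ∈ Sinf A) (hT : T ∈ Sinf A)
    (hST : (S ∩ T).Nonempty) : S ⊆ T ∨ T ⊆ S := by
  obtain ⟨z, hzS, hzT⟩ := hST
  rcases hS with (rfl | ⟨w, rfl⟩) | ⟨w, rfl⟩
  · exact absurd hzS (Set.notMem_empty z)
  · exact Or.inl (Set.singleton_subset_iff.2 (Set.mem_singleton_iff.1 hzS ▸ hzT))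
  rcases hT with (rfl | ⟨v, rfl⟩) | ⟨v, rfl⟩
  · exact absurd hzT (Set.notMem_empty z)
  · exact Or.inr (Set.singleton_subset_iff.2 (Set.mem_singleton_iff.1 hzT ▸ hzS))
  · exact (prefix_or_prefix_of_mem_cone hzS hzT).symm.imp cone_subset_cone cone_subset_cone

lemma isPiSystem_Sinf : IsPiSystem (Sinf A) := fun S hS T hT hST =>
  (subset_or_subset_of_mem_Sinf hS hT hST).elim (fun h => by rwa [Set.inter_eq_left.2 h])
    (fun h => by rwa [Set.inter_eq_right.2 h])

lemma singleton_mem_Sinf (w : List A) : ({Sum.inl w} : Set (Words A)) ∈ Sinf A :=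
  Or.inl (Or.inr ⟨w, rfl⟩)

lemma cone_mem_Sinf (w : List A) : cone w ∈ Sinf A := Or.inr ⟨w, rfl⟩

lemma measurableSet_cone (w : List A) : MeasurableSet (cone w) :=
  MeasurableSpace.measurableSet_generateFrom (cone_mem_Sinf w)

lemma measure_cone [Fintype A] (μ : Measure (Words A)) (w : List A) :
    μ (cone w) = μ {Sum.inl w} + ∑ a, μ (cone (w ++ [a])) := by
  rw [cone_eq_union w, measure_union (disjoint_singleton_iUnion_cone_append w)
    (MeasurableSet.iUnion fun a => measurableSet_cone _),
    measure_iUnion (fun a b hab => disjoint_cone_append w hab) (fun a => measurableSet_cone _),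
    tsum_fintype]

lemma measurable_of_measurableSet_preimage_cone [Countable A] {α : Type*} [MeasurableSpace α]
    {f : α → Words A} (hf : ∀ w, MeasurableSet (f ⁻¹' cone w)) : Measurable f := by
  refine measurable_generateFrom fun S hS => ?_
  rcases hS with (rfl | ⟨w, rfl⟩) | ⟨w, rfl⟩
  · exact MeasurableSet.empty
  · change MeasurableSet (f ⁻¹' ({Sum.inl w} : Set (Words A)))
    rw [singleton_inl_eq_diff, Set.preimage_sdiff, Set.preimage_iUnion]
    exact (hf w).diff (MeasurableSet.iUnion fun a => hf _)
  · exact hf w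

section Prefixes

variable {P : List A → Prop} (hP : ∀ ⦃w v⦄, w <+: v → P v → P w)
  (hP_length : ∀ ⦃u v⦄, P u → P v → u.length = v.length → u = v)
include hP hP_length

lemma exists_inr_mem_cone_iff (hlen : ∀ n, ∃ w, w.length = n ∧ P w) :
    ∃ f : ℕ → A, ∀ w, Sum.inr f ∈ cone w ↔ P w := by
  choose W hWlen hWP using hlen
  have hWtake : ∀ {w} i, P w → i ≤ w.length → W i = w.take i := fun i hw hi =>
    hP_length (hWP i) (hP (List.take_prefix i _) hw) (by simp [hWlen, hi])
  refine ⟨fun i => (W (i + 1))[i]'(by simp [hWlen]), fun w => ⟨fun h => ?_, fun hw => ?_⟩⟩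
  · have hW : W w.length = w := by
      refine List.ext_getElem (hWlen _) fun i hi hi' => ?_
      calc (W w.length)[i] = ((W w.length).take (i + 1))[i]'(by simp [hWlen]; omega) := by
            rw [List.getElem_take]
        _ = (W (i + 1))[i]'(by simp [hWlen]) :=
            List.getElem_of_eq (hWtake (i + 1) (hWP _) (by omega)).symm _
        _ = w[i] := mem_cone_inr.1 h i hi'
    exact hW ▸ hWP _
  · refine mem_cone_inr.2 fun i hi => ?_
    rw [List.getElem_of_eq (hWtake (i + 1) hw hi), List.getElem_take]

lemma exists_mem_cone_iff (hnil : P []) : ∃ z : Words A, ∀ w, z ∈ cone w ↔ P w := by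
  by_cases hstop : ∃ u, P u ∧ ∀ a, ¬ P (u ++ [a])
  · obtain ⟨u, hu, hstop⟩ := hstop
    refine ⟨Sum.inl u, fun w => mem_cone_inl.trans ⟨fun h => hP h hu, fun hw => ?_⟩⟩
    rcases le_or_gt w.length u.length with hle | hlt
    · rw [hP_length hw (hP (List.take_prefix w.length u) hu) (by simp [hle])]
      exact List.take_prefix _ u
    · have hwu : w.take u.length = u :=
        hP_length (hP (List.take_prefix _ w) hw) hu (by simp; omega)
      refine absurd (hP (List.take_prefix (u.length + 1) w) hw) ?_
      rw [← List.take_append_getElem hlt, hwu]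
      exact hstop _
  · push Not at hstop
    have hlen : ∀ n, ∃ w, w.length = n ∧ P w := by
      intro n
      induction n with
      | zero => exact ⟨[], rfl, hnil⟩
      | succ n ih =>
        obtain ⟨w, rfl, hw⟩ := ih
        obtain ⟨a, ha⟩ := hstop w hw
        exact ⟨w ++ [a], by simp, ha⟩
    obtain ⟨f, hf⟩ := exists_inr_mem_cone_iff hP hP_length hlen
    exact ⟨Sum.inr f, hf⟩

end Prefixes

section Layout

variable [Fintype A] [LinearOrder A] (c : List A → ℝ≥0)

noncomputable def childOffset (w : List A) (a : A) : ℝ≥0 :=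
  ∑ b ∈ Finset.univ.filter (· < a), c (w ++ [b])

-- Recursion on the reversed word, so that `leftEnd (w ++ [a])` unfolds.
noncomputable def leftEndRev : List A → ℝ
  | [] => 0
  | a :: v => leftEndRev v + childOffset c v.reverse a

noncomputable def leftEnd (w : List A) : ℝ := leftEndRev c w.reverse

noncomputable def interval (w : List A) : Set ℝ := Set.Ico (leftEnd c w) (leftEnd c w + c w)

lemma leftEnd_append (w : List A) (a : A) :
    leftEnd c (w ++ [a]) = leftEnd c w + childOffset c w a := by
  simp [leftEnd, leftEndRev]

lemma volume_interval (w : List A) : volume (interval c w) = c w := by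
  rw [interval, Real.volume_Ico, add_sub_cancel_left, ENNReal.ofReal_coe_nnreal]

variable {c}

lemma disjoint_interval_append (w : List A) {a b : A} (hab : a ≠ b) :
    Disjoint (interval c (w ++ [a])) (interval c (w ++ [b])) := by
  have key : ∀ {a b : A}, a < b → Disjoint (interval c (w ++ [a])) (interval c (w ++ [b])) :=
    fun {a b} hab => Set.disjoint_left.2 fun x ⟨_, hxa⟩ ⟨hxb, _⟩ => by
      have hle : ((childOffset c w a + c (w ++ [a]) : ℝ≥0) : ℝ) ≤ childOffset c w b :=
        NNReal.coe_le_coe.2 (sum_filter_lt_add_le_sum_filter_lt _ hab)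
      rw [leftEnd_append] at hxa hxb
      push_cast at hle
      linarith
  rcases hab.lt_or_gt with h | h
  · exact key h
  · exact (key h).symm

variable (hc : ∀ w, ∑ a, c (w ++ [a]) ≤ c w)
include hc

lemma interval_append_subset (w : List A) (a : A) :
    interval c (w ++ [a]) ⊆ interval c w := by
  have hle : ((childOffset c w a + c (w ++ [a]) : ℝ≥0) : ℝ) ≤ c w :=
    NNReal.coe_le_coe.2 ((sum_filter_lt_add_le_sum _ a).trans (hc w))
  push_cast at hle
  refine Set.Ico_subset_Ico ?_ ?_ <;> rw [leftEnd_append]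
  · exact le_add_of_nonneg_right (childOffset c w a).coe_nonneg
  · linarith

lemma interval_subset_of_prefix {w v : List A} (h : w <+: v) : interval c v ⊆ interval c w := by
  obtain ⟨t, rfl⟩ := h
  induction t using List.reverseRecOn with
  | nil => rw [List.append_nil]
  | append_singleton t a ih =>
    rw [← List.append_assoc]
    exact (interval_append_subset hc _ a).trans ih

lemma disjoint_interval_of_length_eq {u v : List A} (huv : u ≠ v) (hl : u.length = v.length) :
    Disjoint (interval c u) (interval c v) := by
  induction u using List.reverseRecOn generalizing v with
  | nil => exact absurd (List.eq_nil_of_length_eq_zero hl.symm).symm huv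
  | append_singleton u a ih =>
    obtain rfl | ⟨v, b, rfl⟩ := v.eq_nil_or_concat'
    · simp at hl
    by_cases h : u = v
    · subst h
      exact disjoint_interval_append u fun hab => huv (hab ▸ rfl)
    · exact (ih h (by simpa using hl)).mono (interval_append_subset hc u a)
        (interval_append_subset hc v b)

lemma exists_mem_cone_iff_mem_interval {x : ℝ} (hx : x ∈ interval c []) :
    ∃ z : Words A, ∀ w, z ∈ cone w ↔ x ∈ interval c w :=
  exists_mem_cone_iff (fun _ _ h hv => interval_subset_of_prefix hc h hv)
    (fun _ _ hu hv hl => by_contra fun h =>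
      Set.disjoint_left.1 (disjoint_interval_of_length_eq hc h hl) hu hv) hx

omit hc

variable (c) in
open Classical in
noncomputable def code (x : ℝ) : Words A :=
  if h : ∃ z : Words A, ∀ w, z ∈ cone w ↔ x ∈ interval c w then h.choose else Sum.inl []

lemma code_of_notMem {x : ℝ} (hx : x ∉ interval c []) : code c x = Sum.inl [] :=
  dif_neg fun ⟨z, hz⟩ => hx ((hz []).1 (cone_nil ▸ Set.mem_univ z))

include hc

lemma code_mem_cone_iff {x : ℝ} (hx : x ∈ interval c []) (w : List A) :
    code c x ∈ cone w ↔ x ∈ interval c w := by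
  have h := exists_mem_cone_iff_mem_interval hc hx
  have hcode : code c x = h.choose := dif_pos h
  exact hcode ▸ h.choose_spec w

lemma preimage_code_cone_inter (w : List A) :
    code c ⁻¹' cone w ∩ interval c [] = interval c w := by
  ext x
  refine ⟨fun ⟨h, hx⟩ => (code_mem_cone_iff hc hx w).1 h, fun h => ?_⟩
  have hx := interval_subset_of_prefix hc w.nil_prefix h
  exact ⟨(code_mem_cone_iff hc hx w).2 h, hx⟩

lemma measurable_code : Measurable (code c) := by
  refine measurable_of_measurableSet_preimage_cone fun w => ?_
  by_cases hw : w = []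
  · rw [hw, cone_nil, Set.preimage_univ]
    exact MeasurableSet.univ
  · convert (measurableSet_Ico : MeasurableSet (interval c w)) using 1
    ext x
    by_cases hx : x ∈ interval c []
    · exact code_mem_cone_iff hc hx w
    · rw [Set.mem_preimage, code_of_notMem hx]
      exact iff_of_false (fun h => hw (List.prefix_nil.1 (mem_cone_inl.1 h)))
        fun h => hx (interval_subset_of_prefix hc w.nil_prefix h)

end Layout

theorem exists_measure_cone_eq [Fintype A] (c : List A → ℝ≥0)
    (hc : ∀ w, ∑ a, c (w ++ [a]) ≤ c w) :
    ∃ μ : Measure (Words A), ∀ w, μ (cone w) = c w := by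
  let _ : LinearOrder A := LinearOrder.lift' _ (Fintype.equivFin A).injective
  refine ⟨(volume.restrict (interval c [])).map (code c), fun w => ?_⟩
  rw [Measure.map_apply (measurable_code hc) (measurableSet_cone w),
    Measure.restrict_apply (measurable_code hc (measurableSet_cone w)),
    preimage_code_cone_inter hc, volume_interval]

lemma ext_of_forall_mem_Sinf {μ ν : Measure (Words A)} [IsFiniteMeasure μ]
    (h : ∀ S ∈ Sinf A, μ S = ν S) : μ = ν :=
  ext_of_generate_finite (Sinf A) rfl isPiSystem_Sinf h
    (by simpa only [cone_nil] using h _ (cone_mem_Sinf []))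

variable [Fintype A] {m : Set (Words A) → ℝ≥0}

lemma cone_additive_of_forall_mem_Sinf {ν : Measure (Words A)}
    (hν : ∀ S ∈ Sinf A, ν S = m S) (w : List A) :
    m (cone w) = m {Sum.inl w} + ∑ a, m (cone (w ++ [a])) := by
  have h := measure_cone ν w
  simp only [hν _ (cone_mem_Sinf _), hν _ (singleton_mem_Sinf w)] at h
  exact_mod_cast h

lemma exists_measure_eq_on_Sinf (h0 : m ∅ = 0)
    (hm : ∀ w, m (cone w) = m {Sum.inl w} + ∑ a, m (cone (w ++ [a]))) :
    ∃ ν : Measure (Words A), ∀ S ∈ Sinf A, ν S = m S := by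
  obtain ⟨ν, hν⟩ :=
    exists_measure_cone_eq (fun w => m (cone w)) fun w => (hm w).symm ▸ le_add_self
  refine ⟨ν, ?_⟩
  rintro S ((rfl | ⟨w, rfl⟩) | ⟨w, rfl⟩)
  · simp [h0]
  · have h := measure_cone ν w
    rw [hν, hm w, ENNReal.coe_add, ENNReal.ofNNReal_finsetSum] at h
    simp only [hν] at h
    exact ((ENNReal.add_left_inj (ENNReal.sum_ne_top.2 fun _ _ => ENNReal.coe_ne_top)).1 h).symm
  · exact hν w

end Words

/-- Extension theorem for pre-measures on `S_∞`. -/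
theorem extension_iff {A : Type*} [Fintype A] (m : Set (Words A) → NNReal)
    (h0 : m ∅ = 0) :
    (∃! ν : Measure (Words A), ∀ S ∈ Sinf A, ν S = (m S : ENNReal)) ↔
    (∀ w : List A,
      m (cone w) = m {Sum.inl w} + ∑ a : A, m (cone (w ++ [a]))) := by
  refine ⟨fun ⟨ν, hν, _⟩ => Words.cone_additive_of_forall_mem_Sinf hν, fun hm => ?_⟩
  obtain ⟨ν, hν⟩ := Words.exists_measure_eq_on_Sinf h0 hm
  have : IsFiniteMeasure ν :=
    ⟨by rw [← Words.cone_nil, hν _ (Words.cone_mem_Sinf [])]; exact ENNReal.coe_lt_top⟩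
  exact ⟨ν, hν, fun μ hμ =>
    (Words.ext_of_forall_mem_Sinf fun S hS => (hν S hS).trans (hμ S hS).symm).symm⟩
end

section
/- Let F be a Set endofunctor, β : X → FX a coalgebra, and b_β(R) = (β × β)⁻¹(Rel(F)(R)). If g : 𝒫(X×X) → 𝒫(X×X) is compatible with b_β (i.e., monotone and R ⊆ b_β(R') implies g(R) ⊆ b_β(g(R'))), then any bisimulation up-to g (relation R with R ⊆ b_β(g(R))) is contained in a bisimulation (a relation S with S ⊆ b_β(S)). -/
open CategoryTheory

universe u

/-- The relation lifting `Rel(F)(R)` of a relation `R ⊆ X × X` along a `Set`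
endofunctor `F`. -/
def relLift (F : Type u ⥤ Type u) {X : Type u} (R : Set (X × X)) :
    Set (F.obj X × F.obj X) :=
  {p | ∃ d : F.obj R,
    p.1 = F.map (TypeCat.ofHom (fun r : R => (r : X × X).1)) d ∧
    p.2 = F.map (TypeCat.ofHom (fun r : R => (r : X × X).2)) d}

/-- The map `b_β(R) = (β × β)⁻¹(Rel(F)(R))`. -/
def bCoalg (F : Type u ⥤ Type u) {X : Type u} (β : X → F.obj X)
    (R : Set (X × X)) : Set (X × X) :=
  (fun p : X × X => (β p.1, β p.2)) ⁻¹' relLift F R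

/-!
The union `S = ⋃ₙ gⁿ(R)` is a bisimulation: compatibility propagates
`R ⊆ b(g R)` along the iterates to `gⁿ(R) ⊆ b(gⁿ⁺¹(R))`, and monotonicity of `b`
then gives `gⁿ(R) ⊆ b(S)` for every `n`.
-/

section CompatibleUpTo

variable {α : Type*} {b g : α → α}

theorem iterate_le_of_compatible [LE α] (hcomp : ∀ x y, x ≤ b y → g x ≤ b (g y)) {x : α}
    (hx : x ≤ b (g x)) (n : ℕ) : g^[n] x ≤ b (g^[n + 1] x) := by
  induction n with
  | zero => exact hx
  | succ n ih =>
    rw [Function.iterate_succ_apply' g (n + 1)]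
    simpa only [Function.iterate_succ_apply'] using hcomp _ _ ih

theorem iSup_iterate_le_of_compatible [CompleteLattice α] (hb : Monotone b)
    (hcomp : ∀ x y, x ≤ b y → g x ≤ b (g y)) {x : α} (hx : x ≤ b (g x)) :
    ⨆ n, g^[n] x ≤ b (⨆ n, g^[n] x) :=
  iSup_le fun n => (iterate_le_of_compatible hcomp hx n).trans <|
    hb (le_iSup (fun n => g^[n] x) (n + 1))

end CompatibleUpTo

theorem relLift_mono (F : Type u ⥤ Type u) {X : Type u} {R R' : Set (X × X)}
    (h : R ⊆ R') : relLift F R ⊆ relLift F R' := by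
  rintro p ⟨d, h1, h2⟩
  refine ⟨F.map (TypeCat.ofHom (Set.inclusion h)) d, ?_, ?_⟩
  · rw [h1, ← Functor.map_comp_apply]
    rfl
  · rw [h2, ← Functor.map_comp_apply]
    rfl

theorem bCoalg_monotone (F : Type u ⥤ Type u) {X : Type u} (β : X → F.obj X) :
    Monotone (bCoalg F β) :=
  fun _ _ h => Set.preimage_mono (relLift_mono F h)

theorem bisim_up_to_compatible_contained_in_bisim_general (F : Type u ⥤ Type u)
    {X : Type u} (β : X → F.obj X)
    (g : Set (X × X) → Set (X × X))
    (hcomp : ∀ R R' : Set (X × X), R ⊆ bCoalg F β R' → g R ⊆ bCoalg F β (g R'))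
    (R : Set (X × X)) (hR : R ⊆ bCoalg F β (g R)) :
    ∃ S : Set (X × X), R ⊆ S ∧ S ⊆ bCoalg F β S :=
  ⟨⨆ n, g^[n] R, le_iSup (fun n => g^[n] R) 0,
    iSup_iterate_le_of_compatible (bCoalg_monotone F β) hcomp hR⟩

/-- Any bisimulation up-to a compatible function `g` is contained in a bisimulation. -/
theorem bisim_up_to_compatible_contained_in_bisim (F : Type u ⥤ Type u)
    {X : Type u} (β : X → F.obj X)
    (g : Set (X × X) → Set (X × X))
    (hmono : Monotone g)
    (hcomp : ∀ R R' : Set (X × X), R ⊆ bCoalg F β R' → g R ⊆ bCoalg F β (g R'))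
    (R : Set (X × X)) (hR : R ⊆ bCoalg F β (g R)) :
    ∃ S : Set (X × X), R ⊆ S ∧ S ⊆ bCoalg F β S :=
  bisim_up_to_compatible_contained_in_bisim_general F β g hcomp R hR
end

section
/- Let V be a finite-dimensional real vector space and β = ⟨β₁, β_*, a↦τ_a⟩ : V → ℝ × ℝ × V^A a coalgebra where β₁, β_* are linear forms and each τ_a is linear. Then the functions a(R) = {(u+u', v+v') : (u,v) ∈ R, (u',v') ∈ R} and m_λ(R) = {(λu, λv) : (u,v) ∈ R} are compatible with b_β for every λ ∈ ℝ: if R ⊆ b_β(R') then a(R) ⊆ b_β(a(R')) and m_λ(R) ⊆ b_β(m_λ(R')). -/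
/-- `b_β` for a linear Moore coalgebra `β = ⟨β₁, β_*, a ↦ τ_a⟩ : V → ℝ × ℝ × V^A`. -/
def bLin {A V : Type*} [AddCommGroup V] [Module ℝ V]
    (b1 bs : V →ₗ[ℝ] ℝ) (τ : A → V →ₗ[ℝ] V) (R : Set (V × V)) : Set (V × V) :=
  {p | b1 p.1 = b1 p.2 ∧ bs p.1 = bs p.2 ∧ ∀ a : A, (τ a p.1, τ a p.2) ∈ R}

/-- Pairwise sum of related pairs. -/
def addRel {V : Type*} [AddCommGroup V] (R : Set (V × V)) : Set (V × V) :=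
  {p | ∃ q ∈ R, ∃ q' ∈ R, p = (q.1 + q'.1, q.2 + q'.2)}

/-- Scalar multiple of related pairs. -/
def smulRel {V : Type*} [AddCommGroup V] [Module ℝ V] (lam : ℝ)
    (R : Set (V × V)) : Set (V × V) :=
  {p | ∃ q ∈ R, p = (lam • q.1, lam • q.2)}

/-! Every component of `β` is linear, so it commutes with sums and scalar multiples of pairs:
the observations of a sum (multiple) agree when those of the summands do, and its
`a`-successors are the sum (multiple) of theirs. -/

section Compatibility

variable {A V : Type*} [AddCommGroup V] {R R' : Set (V × V)}

theorem add_mem_addRel {q q' : V × V} (hq : q ∈ R) (hq' : q' ∈ R) :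
    (q.1 + q'.1, q.2 + q'.2) ∈ addRel R :=
  ⟨q, hq, q', hq', rfl⟩

variable [Module ℝ V] {b1 bs : V →ₗ[ℝ] ℝ} {τ : A → V →ₗ[ℝ] V}

theorem smul_mem_smulRel (lam : ℝ) {q : V × V} (hq : q ∈ R) :
    (lam • q.1, lam • q.2) ∈ smulRel lam R :=
  ⟨q, hq, rfl⟩

theorem addRel_subset_bLin (h : R ⊆ bLin b1 bs τ R') :
    addRel R ⊆ bLin b1 bs τ (addRel R') := by
  rintro _ ⟨q, hq, q', hq', rfl⟩
  obtain ⟨hb1, hbs, hτ⟩ := h hq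
  obtain ⟨hb1', hbs', hτ'⟩ := h hq'
  refine ⟨?_, ?_, fun a => ?_⟩
  · simp only [map_add, hb1, hb1']
  · simp only [map_add, hbs, hbs']
  · simpa only [map_add] using add_mem_addRel (hτ a) (hτ' a)

theorem smulRel_subset_bLin (lam : ℝ) (h : R ⊆ bLin b1 bs τ R') :
    smulRel lam R ⊆ bLin b1 bs τ (smulRel lam R') := by
  rintro _ ⟨q, hq, rfl⟩
  obtain ⟨hb1, hbs, hτ⟩ := h hq
  refine ⟨?_, ?_, fun a => ?_⟩
  · simp only [map_smul, hb1]
  · simp only [map_smul, hbs]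
  · simpa only [map_smul] using smul_mem_smulRel lam (hτ a)

end Compatibility

theorem add_smul_compatible_general {A V : Type*} [AddCommGroup V] [Module ℝ V]
    (b1 bs : V →ₗ[ℝ] ℝ) (τ : A → V →ₗ[ℝ] V) (lam : ℝ)
    (R R' : Set (V × V)) (h : R ⊆ bLin b1 bs τ R') :
    addRel R ⊆ bLin b1 bs τ (addRel R') ∧
    smulRel lam R ⊆ bLin b1 bs τ (smulRel lam R') :=
  ⟨addRel_subset_bLin h, smulRel_subset_bLin lam h⟩

/-- The up-to-sum and up-to-scalar-multiplication functions are compatible with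
`b_β` for a linear coalgebra on a finite-dimensional real vector space. -/
theorem add_smul_compatible {A V : Type*} [AddCommGroup V] [Module ℝ V]
    [FiniteDimensional ℝ V]
    (b1 bs : V →ₗ[ℝ] ℝ) (τ : A → V →ₗ[ℝ] V) (lam : ℝ)
    (R R' : Set (V × V)) (h : R ⊆ bLin b1 bs τ R') :
    addRel R ⊆ bLin b1 bs τ (addRel R') ∧
    smulRel lam R ⊆ bLin b1 bs τ (smulRel lam R') :=
  add_smul_compatible_general b1 bs τ lam R R' h
end

section
/- The map Π : 𝔻(A^∞) → [0,1] × [0,1] × (𝔻A^∞)^A defined by Π(m) = ⟨m(A^∞), m({ε}), a ↦ m_a⟩ is injective after composing with the final Moore-coalgebra morphism: if φ_Π denotes the unique coalgebra morphism from (𝔻A^∞, Π) to the final F-coalgebra (([0,1]×[0,1])^{A^*}, ω), then φ_Π is injective. Equivalently, two sub-probability measures m, m' on A^∞ with m(wA^∞) = m'(wA^∞) and m({w}) = m'({w}) for all finite words w are equal. -/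
open MeasureTheory

/-! Two cones `vA^∞`, `wA^∞` meet only when `v` and `w` are comparable in the prefix order, and
then one contains the other; a singleton meeting a set lies inside it. Hence the generating
family `S_∞` is a π-system, and since `cone [] = A^∞` the two finite measures agree by the
π-λ uniqueness theorem. -/

theorem isPiSystem_of_subset_or_subset {α : Type*} {C : Set (Set α)}
    (h : ∀ s ∈ C, ∀ t ∈ C, (s ∩ t).Nonempty → s ⊆ t ∨ t ⊆ s) : IsPiSystem C := by
  intro s hs t ht hst
  rcases h s hs t ht hst with hst' | hts
  · rwa [Set.inter_eq_self_of_subset_left hst']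
  · rwa [Set.inter_eq_self_of_subset_right hts]

section Words

variable {A : Type*}

theorem inl_mem_cone_iff {u w : List A} : (Sum.inl u : Words A) ∈ cone w ↔ w <+: u := by
  constructor
  · rintro ⟨t | g, hy⟩
    · exact ⟨t, Sum.inl.inj hy⟩
    · cases hy
  · rintro ⟨t, rfl⟩
    exact ⟨Sum.inl t, rfl⟩

theorem inr_mem_cone_iff {f : ℕ → A} {w : List A} :
    (Sum.inr f : Words A) ∈ cone w ↔ (List.range w.length).map f = w := by
  constructor
  · rintro ⟨t | g, hy⟩
    · cases hy
    · cases hy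
      exact List.ext_getElem (by simp) fun i _ hi => by simp [hi]
  · intro h
    refine ⟨Sum.inr fun n => f (n + w.length), congrArg Sum.inr (funext fun n => ?_)⟩
    split_ifs with hn
    · simpa using List.getElem_of_eq h.symm hn
    · exact congrArg f (Nat.sub_add_cancel (not_lt.mp hn))

theorem cone_nil : cone ([] : List A) = Set.univ := by
  refine Set.eq_univ_of_forall fun x => ?_
  cases x with
  | inl u => exact inl_mem_cone_iff.mpr u.nil_prefix
  | inr f => exact inr_mem_cone_iff.mpr rfl

theorem map_range_prefix_map_range (f : ℕ → A) {m n : ℕ} (h : m ≤ n) :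
    (List.range m).map f <+: (List.range n).map f := by
  rw [List.prefix_iff_eq_take, List.length_map, List.length_range, ← List.map_take,
    List.take_range, Nat.min_eq_left h]

theorem cone_anti {v w : List A} (h : v <+: w) : cone w ⊆ cone v := by
  intro x hx
  cases x with
  | inl u => exact inl_mem_cone_iff.mpr (h.trans (inl_mem_cone_iff.mp hx))
  | inr f =>
    have hfv : (List.range v.length).map f <+: w :=
      inr_mem_cone_iff.mp hx ▸ map_range_prefix_map_range f h.length_le
    exact inr_mem_cone_iff.mpr
      ((List.prefix_of_prefix_length_le hfv h (by simp)).eq_of_length (by simp))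

theorem prefix_or_prefix_of_mem_cone {x : Words A} {v w : List A}
    (hv : x ∈ cone v) (hw : x ∈ cone w) : v <+: w ∨ w <+: v := by
  cases x with
  | inl u =>
    exact List.prefix_or_prefix_of_prefix (inl_mem_cone_iff.mp hv) (inl_mem_cone_iff.mp hw)
  | inr f =>
    rw [← inr_mem_cone_iff.mp hv, ← inr_mem_cone_iff.mp hw]
    exact (le_total _ _).imp (map_range_prefix_map_range f) (map_range_prefix_map_range f)

theorem subset_or_subset_of_mem_Sinf {s t : Set (Words A)} (hs : s ∈ Sinf A) (ht : t ∈ Sinf A)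
    (hst : (s ∩ t).Nonempty) : s ⊆ t ∨ t ⊆ s := by
  obtain ⟨x, hxs, hxt⟩ := hst
  rcases hs with (rfl | ⟨u, rfl⟩) | ⟨v, rfl⟩
  · exact absurd hxs id
  · exact Or.inl (Set.singleton_subset_iff.mpr (Set.mem_singleton_iff.mp hxs ▸ hxt))
  rcases ht with (rfl | ⟨u, rfl⟩) | ⟨w, rfl⟩
  · exact absurd hxt id
  · exact Or.inr (Set.singleton_subset_iff.mpr (Set.mem_singleton_iff.mp hxt ▸ hxs))
  exact (prefix_or_prefix_of_mem_cone hxs hxt).symm.imp cone_anti cone_anti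

theorem isPiSystem_Sinf : IsPiSystem (Sinf A) :=
  isPiSystem_of_subset_or_subset fun _ hs _ ht => subset_or_subset_of_mem_Sinf hs ht

end Words

theorem subprob_eq_of_eq_on_cones_and_singletons_general {A : Type*}
    (m m' : Measure (Words A)) (hm : m Set.univ ≤ 1)
    (hcone : ∀ w : List A, m (cone w) = m' (cone w))
    (hsing : ∀ w : List A, m {Sum.inl w} = m' {Sum.inl w}) :
    m = m' := by
  have : IsFiniteMeasure m := ⟨hm.trans_lt ENNReal.one_lt_top⟩
  refine ext_of_generate_finite (Sinf A) rfl isPiSystem_Sinf ?_ ?_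
  · rintro s ((rfl | ⟨w, rfl⟩) | ⟨w, rfl⟩)
    · simp
    · exact hsing w
    · exact hcone w
  · simpa only [cone_nil] using hcone []

/-- Two sub-probability measures on `A^∞` that agree on all cones `wA^∞` and all
singletons of finite words are equal (injectivity of `φ_Π`). -/
theorem subprob_eq_of_eq_on_cones_and_singletons {A : Type*} [Fintype A]
    (m m' : Measure (Words A)) (hm : m Set.univ ≤ 1) (hm' : m' Set.univ ≤ 1)
    (hcone : ∀ w : List A, m (cone w) = m' (cone w))
    (hsing : ∀ w : List A, m {Sum.inl w} = m' {Sum.inl w}) :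
    m = m' :=
  subprob_eq_of_eq_on_cones_and_singletons_general m m' hm hcone hsing
end
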